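/- arXiv:2211.09772 — 5 statements merged into one kernel-verified Lean document; each statement's English description precedes it below -/
import Mathlib

section
/- Let p = 17, D = {0,1,2,4,8,9,13} ⊆ 𝔽_17, and for n a multiple of 7 let S(n) be the set of vectors in D^n in which each of the digits 0, 1, 2, 4, 8 occurs exactly n/7 times. Then S(n) is a cap in 𝔽_17^n. -/
open Finset

abbrev DF : Finset (ZMod 17) := {0, 1, 2, 4, 8, 9, 13}

def W (v0 v1 v2 v4 v8 v9 v13 : ℤ) : ZMod 17 → ℤ := fun a =>
  if a = 0 then v0 else if a = 1 then v1 else if a = 2 then v2 else if a = 4 then v4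
  else if a = 8 then v8 else if a = 9 then v9 else if a = 13 then v13 else 0

lemma sum_fiber {n : ℕ} (a : Fin n → ZMod 17) (ha : ∀ i, a i ∈ DF) (f : ZMod 17 → ℤ) :
    ∑ i, f (a i) = ∑ d ∈ DF, ((Finset.univ.filter (fun i => a i = d)).card : ℤ) * f d := by
  rw [← Finset.sum_fiberwise_of_maps_to (fun i _ => ha i) (fun i => f (a i))]
  refine Finset.sum_congr rfl fun d _ => ?_
  rw [Finset.sum_congr rfl (fun i hi => by rw [(Finset.mem_filter.mp hi).2]),
    Finset.sum_const, nsmul_eq_mul]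

lemma sum_DF (g : ZMod 17 → ℤ) :
    ∑ d ∈ DF, g d = g 0 + g 1 + g 2 + g 4 + g 8 + g 9 + g 13 := by
  show ∑ d ∈ ({0, 1, 2, 4, 8, 9, 13} : Finset (ZMod 17)), g d = _
  rw [Finset.sum_insert (by decide), Finset.sum_insert (by decide),
    Finset.sum_insert (by decide), Finset.sum_insert (by decide),
    Finset.sum_insert (by decide), Finset.sum_insert (by decide),
    Finset.sum_singleton]
  ring

lemma sum_weight {n m : ℕ} (hn : n = 7 * m) (a : Fin n → ZMod 17)
    (ha : ∀ i, a i ∈ DF)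
    (hcard : ∀ d ∈ ({0, 1, 2, 4, 8} : Set (ZMod 17)),
      (Finset.univ.filter (fun i => a i = d)).card = n / 7)
    (f : ZMod 17 → ℤ) (hf : f 9 = f 13) :
    ∑ i, f (a i) = (m : ℤ) * (f 0 + f 1 + f 2 + f 4 + f 8 + 2 * f 9) := by
  have h7 : n / 7 = m := by omega
  have h0 := hcard 0 (by simp); have h1 := hcard 1 (by simp)
  have h2 := hcard 2 (by simp); have h4 := hcard 4 (by simp)
  have h8 := hcard 8 (by simp)
  rw [h7] at h0 h1 h2 h4 h8
  have htot : (Finset.univ.filter (fun i => a i = 0)).card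
      + (Finset.univ.filter (fun i => a i = 1)).card
      + (Finset.univ.filter (fun i => a i = 2)).card
      + (Finset.univ.filter (fun i => a i = 4)).card
      + (Finset.univ.filter (fun i => a i = 8)).card
      + (Finset.univ.filter (fun i => a i = 9)).card
      + (Finset.univ.filter (fun i => a i = 13)).card = n := by
    have := sum_fiber a ha (fun _ => (1 : ℤ))
    rw [sum_DF] at this
    simp only [mul_one, Finset.sum_const, Finset.card_univ, Fintype.card_fin,
      nsmul_eq_mul] at this
    exact_mod_cast this.symm
  have h913 : ((Finset.univ.filter (fun i => a i = 9)).card : ℤ)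
      + ((Finset.univ.filter (fun i => a i = 13)).card : ℤ) = 2 * m := by
    have : (Finset.univ.filter (fun i => a i = 9)).card
      + (Finset.univ.filter (fun i => a i = 13)).card = 2 * m := by omega
    exact_mod_cast this
  rw [sum_fiber a ha f, sum_DF, h0, h1, h2, h4, h8]
  linear_combination (-((Finset.univ.filter (fun i => a i = 13)).card : ℤ)) * hf + f 9 * h913

lemma line_cert {n m : ℕ} (hn : n = 7 * m) (x y z : Fin n → ZMod 17)
    (hxD : ∀ i, x i ∈ DF)
    (hxC : ∀ d ∈ ({0, 1, 2, 4, 8} : Set (ZMod 17)),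
      (Finset.univ.filter (fun i => x i = d)).card = n / 7)
    (hyD : ∀ i, y i ∈ DF)
    (hyC : ∀ d ∈ ({0, 1, 2, 4, 8} : Set (ZMod 17)),
      (Finset.univ.filter (fun i => y i = d)).card = n / 7)
    (hzD : ∀ i, z i ∈ DF)
    (hzC : ∀ d ∈ ({0, 1, 2, 4, 8} : Set (ZMod 17)),
      (Finset.univ.filter (fun i => z i = d)).card = n / 7)
    (c : ZMod 17) (hline : ∀ i, z i - x i = c * (y i - x i)) (hxy : x ≠ y)
    (fx fy fz : ZMod 17 → ℤ)
    (h9 : fx 9 = fx 13 ∧ fy 9 = fy 13 ∧ fz 9 = fz 13)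
    (hdiag : ∀ d ∈ DF, fx d + fy d + fz d = 0)
    (hoff : ∀ a ∈ DF, ∀ b ∈ DF, ∀ e ∈ DF, a ≠ b → e - a = c * (b - a) →
      fx a + fy b + fz e < 0) : False := by
  obtain ⟨h9x, h9y, h9z⟩ := h9
  have hsum : ∑ i, (fx (x i) + fy (y i) + fz (z i)) = 0 := by
    rw [Finset.sum_add_distrib, Finset.sum_add_distrib,
      sum_weight hn x hxD hxC fx h9x, sum_weight hn y hyD hyC fy h9y,
      sum_weight hn z hzD hzC fz h9z]
    have d0 := hdiag 0 (by decide); have d1 := hdiag 1 (by decide)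
    have d2 := hdiag 2 (by decide); have d4 := hdiag 4 (by decide)
    have d8 := hdiag 8 (by decide); have d9 := hdiag 9 (by decide)
    linear_combination (m : ℤ) * d0 + (m : ℤ) * d1 + (m : ℤ) * d2 + (m : ℤ) * d4
      + (m : ℤ) * d8 + 2 * (m : ℤ) * d9
  have hle : ∀ i : Fin n, fx (x i) + fy (y i) + fz (z i) ≤ 0 := fun i => by
    by_cases hxyi : x i = y i
    · have hzi : z i = x i := by
        have h := hline i
        rw [← hxyi, sub_self, mul_zero, sub_eq_zero] at h
        exact h
      rw [hzi, ← hxyi]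
      exact le_of_eq (hdiag (x i) (hxD i))
    · exact (hoff (x i) (hxD i) (y i) (hyD i) (z i) (hzD i) hxyi (hline i)).le
  have hex : ∃ i, x i ≠ y i := by
    by_contra h
    push_neg at h
    exact hxy (funext h)
  obtain ⟨i0, hi0⟩ := hex
  have hlt : ∑ i, (fx (x i) + fy (y i) + fz (z i)) < ∑ _i : Fin n, (0 : ℤ) :=
    Finset.sum_lt_sum (fun i _ => hle i)
      ⟨i0, Finset.mem_univ i0,
        hoff (x i0) (hxD i0) (y i0) (hyD i0) (z i0) (hzD i0) hi0 (hline i0)⟩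
  rw [hsum] at hlt
  simp at hlt

lemma line_contra {n m : ℕ} (hm : n = 7 * m) (x y z : Fin n → ZMod 17)
    (hxD : ∀ i, x i ∈ DF)
    (hxC : ∀ d ∈ ({0, 1, 2, 4, 8} : Set (ZMod 17)),
      (Finset.univ.filter (fun i => x i = d)).card = n / 7)
    (hyD : ∀ i, y i ∈ DF)
    (hyC : ∀ d ∈ ({0, 1, 2, 4, 8} : Set (ZMod 17)),
      (Finset.univ.filter (fun i => y i = d)).card = n / 7)
    (hzD : ∀ i, z i ∈ DF)
    (hzC : ∀ d ∈ ({0, 1, 2, 4, 8} : Set (ZMod 17)),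
      (Finset.univ.filter (fun i => z i = d)).card = n / 7)
    (c : ZMod 17) (hc0 : c ≠ 0) (hc1 : c ≠ 1)
    (hline : ∀ i, z i - x i = c * (y i - x i)) (hxy : x ≠ y) : False := by
  have h17 : ∀ u : ZMod 17, u = 0 ∨ u = 1 ∨ u = 2 ∨ u = 3 ∨ u = 4 ∨ u = 5 ∨ u = 6 ∨
      u = 7 ∨ u = 8 ∨ u = 9 ∨ u = 10 ∨ u = 11 ∨ u = 12 ∨ u = 13 ∨ u = 14 ∨ u = 15 ∨
      u = 16 := by decide
  rcases h17 c with rfl | rfl | rfl | rfl | rfl | rfl | rfl | rfl | rfl | rfl | rfl |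
    rfl | rfl | rfl | rfl | rfl | rfl
  · exact hc0 rfl
  · exact hc1 rfl
  · exact line_cert hm x y z hxD hxC hyD hyC hzD hzC _ hline hxy (W 5 6 6 3 0 6 6) (W 2 0 3 6 12 0 0) (W (-7) (-6) (-9) (-9) (-12) (-6) (-6)) (by decide) (by decide) (by decide)
  · exact line_cert hm x y z hxD hxC hyD hyC hzD hzC _ hline hxy (W 0 0 2 5 1 2 2) (W 0 7 8 4 6 4 4) (W 0 (-7) (-10) (-9) (-7) (-6) (-6)) (by decide) (by decide) (by decide)
  · exact line_cert hm x y z hxD hxC hyD hyC hzD hzC _ hline hxy (W 0 13 7 8 13 10 10) (W 0 5 2 0 6 6 6) (W 0 (-18) (-9) (-8) (-19) (-16) (-16)) (by decide) (by decide) (by decide)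
  · exact line_cert hm x y z hxD hxC hyD hyC hzD hzC _ hline hxy (W 0 0 3 4 0 1 1) (W 0 5 2 3 4 3 3) (W 0 (-5) (-5) (-7) (-4) (-4) (-4)) (by decide) (by decide) (by decide)
  · exact line_cert hm x y z hxD hxC hyD hyC hzD hzC _ hline hxy (W 10 0 2 5 1 2 2) (W 0 3 0 1 3 4 4) (W (-10) (-3) (-2) (-6) (-4) (-6) (-6)) (by decide) (by decide) (by decide)
  · exact line_cert hm x y z hxD hxC hyD hyC hzD hzC _ hline hxy (W 7 0 3 4 0 1 1) (W 0 2 2 0 3 3 3) (W (-7) (-2) (-5) (-4) (-3) (-4) (-4)) (by decide) (by decide) (by decide)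
  · exact line_cert hm x y z hxD hxC hyD hyC hzD hzC _ hline hxy (W 0 7 8 4 6 4 4) (W 0 3 0 1 3 4 4) (W 0 (-10) (-8) (-5) (-9) (-8) (-8)) (by decide) (by decide) (by decide)
  · exact line_cert hm x y z hxD hxC hyD hyC hzD hzC _ hline hxy (W 10 12 9 6 0 12 12) (W 10 9 9 6 0 12 12) (W (-20) (-21) (-18) (-12) 0 (-24) (-24)) (by decide) (by decide) (by decide)
  · exact line_cert hm x y z hxD hxC hyD hyC hzD hzC _ hline hxy (W 0 0 0 1 0 4 4) (W 0 7 5 4 9 4 4) (W 0 (-7) (-5) (-5) (-9) (-8) (-8)) (by decide) (by decide) (by decide)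
  · exact line_cert hm x y z hxD hxC hyD hyC hzD hzC _ hline hxy (W 19 5 2 0 6 6 6) (W 0 1 10 11 0 3 3) (W (-19) (-6) (-12) (-11) (-6) (-9) (-9)) (by decide) (by decide) (by decide)
  · exact line_cert hm x y z hxD hxC hyD hyC hzD hzC _ hline hxy (W 9 0 0 1 0 4 4) (W 0 2 4 4 0 1 1) (W (-9) (-2) (-4) (-5) 0 (-5) (-5)) (by decide) (by decide) (by decide)
  · exact line_cert hm x y z hxD hxC hyD hyC hzD hzC _ hline hxy (W 0 13 7 8 13 10 10) (W 0 1 10 11 0 3 3) (W 0 (-14) (-17) (-19) (-13) (-13) (-13)) (by decide) (by decide) (by decide)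
  · exact line_cert hm x y z hxD hxC hyD hyC hzD hzC _ hline hxy (W 0 5 2 0 6 6 6) (W 0 13 7 8 13 10 10) (W 0 (-18) (-9) (-8) (-19) (-16) (-16)) (by decide) (by decide) (by decide)
  · exact line_cert hm x y z hxD hxC hyD hyC hzD hzC _ hline hxy (W 0 7 8 4 6 4 4) (W 0 0 2 5 1 2 2) (W 0 (-7) (-10) (-9) (-7) (-6) (-6)) (by decide) (by decide) (by decide)
  · exact line_cert hm x y z hxD hxC hyD hyC hzD hzC _ hline hxy (W 2 0 3 6 12 0 0) (W 5 6 6 3 0 6 6) (W (-7) (-6) (-9) (-9) (-12) (-6) (-6)) (by decide) (by decide) (by decide)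

theorem cap_p17_digit_construction (n : ℕ) (hn : 7 ∣ n)
    (S : Set (Fin n → ZMod 17))
    (hS : S = {a : Fin n → ZMod 17 |
        (∀ i, a i ∈ ({0, 1, 2, 4, 8, 9, 13} : Set (ZMod 17))) ∧
        ∀ d ∈ ({0, 1, 2, 4, 8} : Set (ZMod 17)),
          (Finset.univ.filter (fun i => a i = d)).card = n / 7}) :
    ∀ x ∈ S, ∀ y ∈ S, ∀ z ∈ S, x ≠ y → x ≠ z → y ≠ z →
      LinearIndependent (ZMod 17) ![y - x, z - x] := by
  subst hS
  intro x hx y hy z hz hxy hxz hyz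
  obtain ⟨m, hm⟩ := hn
  obtain ⟨hxD0, hxC⟩ := hx
  obtain ⟨hyD0, hyC⟩ := hy
  obtain ⟨hzD0, hzC⟩ := hz
  have hxD : ∀ i, x i ∈ DF := fun i => by
    have h := hxD0 i
    simp only [Set.mem_insert_iff, Set.mem_singleton_iff] at h
    simpa using h
  have hyD : ∀ i, y i ∈ DF := fun i => by
    have h := hyD0 i
    simp only [Set.mem_insert_iff, Set.mem_singleton_iff] at h
    simpa using h
  have hzD : ∀ i, z i ∈ DF := fun i => by
    have h := hzD0 i
    simp only [Set.mem_insert_iff, Set.mem_singleton_iff] at h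
    simpa using h
  haveI : Fact (Nat.Prime 17) := ⟨by norm_num⟩
  rw [LinearIndependent.pair_iff]
  intro s t hst
  by_contra hcon
  have hcoords : ∀ i, s * (y i - x i) + t * (z i - x i) = 0 := fun i => by
    have h := congrFun hst i
    simpa [Pi.add_apply, Pi.smul_apply, Pi.sub_apply, smul_eq_mul] using h
  by_cases ht : t = 0
  · have hs : s ≠ 0 := fun h => hcon ⟨h, ht⟩
    have hex : ∃ i, x i ≠ y i := by
      by_contra h
      push_neg at h
      exact hxy (funext h)
    obtain ⟨i0, hi0⟩ := hex
    have h := hcoords i0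
    rw [ht, zero_mul, add_zero, mul_eq_zero] at h
    rcases h with h | h
    · exact hs h
    · exact hi0 (sub_eq_zero.mp h).symm
  · have hline : ∀ i, z i - x i = (-s / t) * (y i - x i) := fun i => by
      have h := hcoords i
      field_simp
      linear_combination h
    have hc0 : (-s / t) ≠ 0 := by
      intro h
      apply hxz
      funext i
      have h2 := hline i
      rw [h, zero_mul, sub_eq_zero] at h2
      exact h2.symm
    have hc1 : (-s / t) ≠ 1 := by
      intro h
      apply hyz
      funext i
      have h2 := hline i
      rw [h, one_mul] at h2
      have : z i = y i := by linear_combination h2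
      exact this.symm
    exact line_contra hm x y z hxD hxC hyD hyC hzD hzC (-s / t) hc0 hc1 hline hxy
end

section
/- Let P ⊆ (ℤ/23ℤ)^3 be the 22 nontrivial solutions of x + z = 2y with entries in D = {0,1,3,4,8,9,10,12,17}. Suppose χ : P → ℤ_{≥0} satisfies, for every digit d ∈ D, that ∑_{v ∈ P, v_1 = d} χ(v) = ∑_{v ∈ P, v_2 = d} χ(v) and ∑_{v ∈ P, v_1 = d} χ(v) = ∑_{v ∈ P, v_3 = d} χ(v). Then χ is identically zero. -/
set_option maxRecDepth 4000

/-- Farkas multipliers for the first family of equations. -/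
def waP23 : ZMod 23 → ℕ := fun d =>
  if d = 0 then 12 else if d = 1 then 2 else if d = 3 then 2 else if d = 4 then 8
  else if d = 8 then 6 else if d = 12 then 6 else 0

/-- Farkas multipliers for the second family of equations. -/
def wbP23 : ZMod 23 → ℕ := fun d =>
  if d = 1 then 5 else if d = 3 then 5 else if d = 4 then 2 else if d = 8 then 3
  else if d = 10 then 6 else if d = 12 then 3 else if d = 17 then 6 else 0

open Finset in
theorem chi_zero_p23
    (D : Finset (ZMod 23)) (hD : D = {0, 1, 3, 4, 8, 9, 10, 12, 17})
    (P : Finset (ZMod 23 × ZMod 23 × ZMod 23))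
    (hP : P = (D ×ˢ D ×ˢ D).filter
        (fun v => v.1 + v.2.2 = 2 * v.2.1 ∧ ¬(v.1 = v.2.1 ∧ v.2.1 = v.2.2)))
    (χ : ZMod 23 × ZMod 23 × ZMod 23 → ℕ)
    (h12 : ∀ d ∈ D,
        ∑ v ∈ P.filter (fun v => v.1 = d), χ v =
          ∑ v ∈ P.filter (fun v => v.2.1 = d), χ v)
    (h13 : ∀ d ∈ D,
        ∑ v ∈ P.filter (fun v => v.1 = d), χ v =
          ∑ v ∈ P.filter (fun v => v.2.2 = d), χ v) :
    ∀ v ∈ P, χ v = 0 := by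
  have hmem : ∀ v ∈ P, v.1 ∈ D ∧ v.2.1 ∈ D ∧ v.2.2 ∈ D := by
    intro v hv
    rw [hP, Finset.mem_filter, Finset.mem_product, Finset.mem_product] at hv
    exact ⟨hv.1.1, hv.1.2.1, hv.1.2.2⟩
  -- generic fiberwise identity
  have fib : ∀ (w : ZMod 23 → ℕ) (g : ZMod 23 × ZMod 23 × ZMod 23 → ZMod 23),
      (∀ v ∈ P, g v ∈ D) →
      ∑ d ∈ D, w d * ∑ v ∈ P.filter (fun v => g v = d), χ v
        = ∑ v ∈ P, w (g v) * χ v := by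
    intro w g hg
    rw [← Finset.sum_fiberwise_of_maps_to hg (fun v => w (g v) * χ v)]
    refine Finset.sum_congr rfl fun d _ => ?_
    rw [Finset.mul_sum]
    refine Finset.sum_congr rfl fun v hv => ?_
    rw [(Finset.mem_filter.mp hv).2]
  have hg1 : ∀ v ∈ P, v.1 ∈ D := fun v hv => (hmem v hv).1
  have hg2 : ∀ v ∈ P, v.2.1 ∈ D := fun v hv => (hmem v hv).2.1
  have hg3 : ∀ v ∈ P, v.2.2 ∈ D := fun v hv => (hmem v hv).2.2
  have key : ∑ v ∈ P, (waP23 v.1 + wbP23 v.1) * χ v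
      = ∑ v ∈ P, (waP23 v.2.1 + wbP23 v.2.2) * χ v := by
    have e1 : ∑ d ∈ D, waP23 d * ∑ v ∈ P.filter (fun v => v.1 = d), χ v
        = ∑ d ∈ D, waP23 d * ∑ v ∈ P.filter (fun v => v.2.1 = d), χ v :=
      Finset.sum_congr rfl fun d hd => by rw [h12 d hd]
    have e2 : ∑ d ∈ D, wbP23 d * ∑ v ∈ P.filter (fun v => v.1 = d), χ v
        = ∑ d ∈ D, wbP23 d * ∑ v ∈ P.filter (fun v => v.2.2 = d), χ v :=
      Finset.sum_congr rfl fun d hd => by rw [h13 d hd]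
    have A1 := fib waP23 (fun v => v.1) hg1
    have A2 := fib waP23 (fun v => v.2.1) hg2
    have B1 := fib wbP23 (fun v => v.1) hg1
    have B3 := fib wbP23 (fun v => v.2.2) hg3
    calc ∑ v ∈ P, (waP23 v.1 + wbP23 v.1) * χ v
        = ∑ v ∈ P, (waP23 v.1 * χ v + wbP23 v.1 * χ v) := by
          refine Finset.sum_congr rfl fun v _ => ?_; ring
      _ = ∑ v ∈ P, waP23 v.1 * χ v + ∑ v ∈ P, wbP23 v.1 * χ v :=
          Finset.sum_add_distrib
      _ = ∑ v ∈ P, waP23 v.2.1 * χ v + ∑ v ∈ P, wbP23 v.2.2 * χ v := by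
          rw [← A1, ← A2, ← B1, ← B3, e1, e2]
      _ = ∑ v ∈ P, (waP23 v.2.1 * χ v + wbP23 v.2.2 * χ v) :=
          Finset.sum_add_distrib.symm
      _ = ∑ v ∈ P, (waP23 v.2.1 + wbP23 v.2.2) * χ v := by
          refine Finset.sum_congr rfl fun v _ => ?_; ring
  have hPeq : P = ({(0,4,8),(0,12,1),(1,9,17),(1,12,0),(1,17,10),(3,10,17),(3,17,8),
      (4,8,12),(8,1,17),(8,4,0),(8,9,10),(8,10,12),(8,17,3),(10,9,8),(10,17,1),
      (12,3,17),(12,8,4),(12,10,8),(17,1,8),(17,3,12),(17,9,1),(17,10,3)} :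
      Finset (ZMod 23 × ZMod 23 × ZMod 23)) := by
    rw [hP, hD]; decide
  have bound : ∀ v ∈ P, waP23 v.2.1 + wbP23 v.2.2 + 1 ≤ waP23 v.1 + wbP23 v.1 := by
    rw [hPeq]
    intro v hv
    fin_cases hv <;> decide
  have ineq : ∑ v ∈ P, (waP23 v.2.1 + wbP23 v.2.2) * χ v + ∑ v ∈ P, χ v
      ≤ ∑ v ∈ P, (waP23 v.1 + wbP23 v.1) * χ v := by
    rw [← Finset.sum_add_distrib]
    refine Finset.sum_le_sum fun v hv => ?_
    calc (waP23 v.2.1 + wbP23 v.2.2) * χ v + χ v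
        = (waP23 v.2.1 + wbP23 v.2.2 + 1) * χ v := by ring
      _ ≤ (waP23 v.1 + wbP23 v.1) * χ v :=
          Nat.mul_le_mul_right _ (bound v hv)
  have hzero : ∑ v ∈ P, χ v = 0 := by omega
  intro v hv
  exact (Finset.sum_eq_zero_iff.mp hzero) v hv
end

section
/- Let p = 29 and D = {0,1,2,3,4,6,14,16,22,26} ⊆ 𝔽_29, and for n a multiple of 10 let S(n) be the set of vectors in D^n in which each of the digits 1, 2, 3, 4, 6, 16, 22, 26 occurs exactly n/10 times. Then S(n) is a cap in 𝔽_29^n. -/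
open Finset

def capU (c d : ℕ) : ℤ :=
  if c = 2 then (if d = 1 then (4 : ℤ) else if d = 2 then (6 : ℤ) else if d = 3 then (-19 : ℤ) else if d = 4 then (-21 : ℤ) else if d = 6 then (-50 : ℤ) else if d = 16 then (0 : ℤ) else if d = 22 then (3 : ℤ) else if d = 26 then (17 : ℤ) else 0) else if c = 3 then (if d = 1 then (11 : ℤ) else if d = 2 then (-25 : ℤ) else if d = 3 then (6 : ℤ) else if d = 4 then (9 : ℤ) else if d = 6 then (0 : ℤ) else if d = 16 then (3 : ℤ) else if d = 22 then (-32 : ℤ) else if d = 26 then (17 : ℤ) else 0) else if c = 4 then (if d = 1 then (1 : ℤ) else if d = 2 then (8 : ℤ) else if d = 3 then (17 : ℤ) else if d = 4 then (10 : ℤ) else if d = 6 then (11 : ℤ) else if d = 16 then (16 : ℤ) else if d = 22 then (19 : ℤ) else if d = 26 then (14 : ℤ) else 0) else if c = 5 then (if d = 1 then (8 : ℤ) else if d = 2 then (2 : ℤ) else if d = 3 then (-1 : ℤ) else if d = 4 then (12 : ℤ) else if d = 6 then (23 : ℤ) else if d = 16 then (3 : ℤ) else if d = 22 then (1 : ℤ)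 else if d = 26 then (5 : ℤ) else 0) else if c = 6 then (if d = 1 then (-11 : ℤ) else if d = 2 then (-25 : ℤ) else if d = 3 then (-8 : ℤ) else if d = 4 then (4 : ℤ) else if d = 6 then (36 : ℤ) else if d = 16 then (-28 : ℤ) else if d = 22 then (-7 : ℤ) else if d = 26 then (-6 : ℤ) else 0) else if c = 7 then (if d = 1 then (-9 : ℤ) else if d = 2 then (-1 : ℤ) else if d = 3 then (-6 : ℤ) else if d = 4 then (-4 : ℤ) else if d = 6 then (-8 : ℤ) else if d = 16 then (-3 : ℤ) else if d = 22 then (8 : ℤ) else if d = 26 then (-1 : ℤ) else 0) else if c = 8 then (if d = 1 then (4 : ℤ) else if d = 2 then (25 : ℤ) else if d = 3 then (-8 : ℤ) else if d = 4 then (-14 : ℤ) else if d = 6 then (7 : ℤ) else if d = 16 then (-4 : ℤ) else if d = 22 then (-1 : ℤ) else if d = 26 then (-19 : ℤ) else 0) else if c = 9 then (if d = 1 then (-70 : ℤ) else if d = 2 then (82 : ℤ) else if d = 3 then (-57 : ℤ) else if d = 4 then (-9 : ℤ) else if d = 6 then (25 : ℤ) else if d = 16 then (13 : ℤ) else if d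 = 22 then (17 : ℤ) else if d = 26 then (22 : ℤ) else 0) else if c = 10 then (if d = 1 then (49 : ℤ) else if d = 2 then (1 : ℤ) else if d = 3 then (-14 : ℤ) else if d = 4 then (29 : ℤ) else if d = 6 then (21 : ℤ) else if d = 16 then (22 : ℤ) else if d = 22 then (-24 : ℤ) else if d = 26 then (14 : ℤ) else 0) else if c = 11 then (if d = 1 then (4 : ℤ) else if d = 2 then (25 : ℤ) else if d = 3 then (-8 : ℤ) else if d = 4 then (-14 : ℤ) else if d = 6 then (7 : ℤ) else if d = 16 then (-4 : ℤ) else if d = 22 then (-1 : ℤ) else if d = 26 then (-19 : ℤ) else 0) else if c = 12 then (if d = 1 then (-21 : ℤ) else if d = 2 then (-86 : ℤ) else if d = 3 then (25 : ℤ) else if d = 4 then (-1 : ℤ) else if d = 6 then (-93 : ℤ) else if d = 16 then (-55 : ℤ) else if d = 22 then (-12 : ℤ) else if d = 26 then (-18 : ℤ) else 0) else if c = 13 then (if d = 1 then (40 : ℤ) else if d = 2 then (47 : ℤ) else if d = 3 then (23 : ℤ) else if d = 4 then (8 : ℤ) else if d = 6 then (83 : ℤ) else if d = 16 then (53 : ℤ)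 else if d = 22 then (31 : ℤ) else if d = 26 then (45 : ℤ) else 0) else if c = 14 then (if d = 1 then (-37 : ℤ) else if d = 2 then (-83 : ℤ) else if d = 3 then (-14 : ℤ) else if d = 4 then (-3 : ℤ) else if d = 6 then (-13 : ℤ) else if d = 16 then (32 : ℤ) else if d = 22 then (-56 : ℤ) else if d = 26 then (17 : ℤ) else 0) else if c = 15 then (if d = 1 then (4 : ℤ) else if d = 2 then (6 : ℤ) else if d = 3 then (-19 : ℤ) else if d = 4 then (-21 : ℤ) else if d = 6 then (-50 : ℤ) else if d = 16 then (12 : ℤ) else if d = 22 then (3 : ℤ) else if d = 26 then (17 : ℤ) else 0) else if c = 16 then (if d = 1 then (-2 : ℤ) else if d = 2 then (10 : ℤ) else if d = 3 then (21 : ℤ) else if d = 4 then (-4 : ℤ) else if d = 6 then (15 : ℤ) else if d = 16 then (-12 : ℤ) else if d = 22 then (74 : ℤ) else if d = 26 then (20 : ℤ) else 0) else if c = 17 then (if d = 1 then (-21 : ℤ) else if d = 2 then (-86 : ℤ) else if d = 3 then (25 : ℤ) else if d = 4 then (-1 : ℤ) else if d = 6 then (-93 : ℤ) else if d = 16 then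 (-55 : ℤ) else if d = 22 then (-12 : ℤ) else if d = 26 then (-18 : ℤ) else 0) else if c = 18 then (if d = 1 then (-26 : ℤ) else if d = 2 then (-11 : ℤ) else if d = 3 then (-4 : ℤ) else if d = 4 then (9 : ℤ) else if d = 6 then (-29 : ℤ) else if d = 16 then (-3 : ℤ) else if d = 22 then (-5 : ℤ) else if d = 26 then (2 : ℤ) else 0) else if c = 19 then (if d = 1 then (-16 : ℤ) else if d = 2 then (-21 : ℤ) else if d = 3 then (-20 : ℤ) else if d = 4 then (-9 : ℤ) else if d = 6 then (-17 : ℤ) else if d = 16 then (-8 : ℤ) else if d = 22 then (-21 : ℤ) else if d = 26 then (-3 : ℤ) else 0) else if c = 20 then (if d = 1 then (-6 : ℤ) else if d = 2 then (44 : ℤ) else if d = 3 then (20 : ℤ) else if d = 4 then (20 : ℤ) else if d = 6 then (40 : ℤ) else if d = 16 then (-21 : ℤ) else if d = 22 then (152 : ℤ) else if d = 26 then (33 : ℤ) else 0) else if c = 21 then (if d = 1 then (-26 : ℤ) else if d = 2 then (-11 : ℤ) else if d = 3 then (-4 : ℤ) else if d = 4 then (9 : ℤ) else if d = 6 then (-29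 : ℤ) else if d = 16 then (-3 : ℤ) else if d = 22 then (-5 : ℤ) else if d = 26 then (2 : ℤ) else 0) else if c = 22 then (if d = 1 then (1 : ℤ) else if d = 2 then (8 : ℤ) else if d = 3 then (17 : ℤ) else if d = 4 then (10 : ℤ) else if d = 6 then (11 : ℤ) else if d = 16 then (16 : ℤ) else if d = 22 then (19 : ℤ) else if d = 26 then (14 : ℤ) else 0) else if c = 23 then (if d = 1 then (8 : ℤ) else if d = 2 then (-3 : ℤ) else if d = 3 then (-9 : ℤ) else if d = 4 then (-4 : ℤ) else if d = 6 then (-5 : ℤ) else if d = 16 then (1 : ℤ) else if d = 22 then (3 : ℤ) else if d = 26 then (6 : ℤ) else 0) else if c = 24 then (if d = 1 then (8 : ℤ) else if d = 2 then (-3 : ℤ) else if d = 3 then (7 : ℤ) else if d = 4 then (-4 : ℤ) else if d = 6 then (-5 : ℤ) else if d = 16 then (1 : ℤ) else if d = 22 then (3 : ℤ) else if d = 26 then (6 : ℤ) else 0) else if c = 25 then (if d = 1 then (-9 : ℤ) else if d = 2 then (-1 : ℤ) else if d = 3 then (-6 : ℤ) else if d = 4 then (-4 : ℤ) else if d = 6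 then (-8 : ℤ) else if d = 16 then (-3 : ℤ) else if d = 22 then (8 : ℤ) else if d = 26 then (-1 : ℤ) else 0) else if c = 26 then (if d = 1 then (-16 : ℤ) else if d = 2 then (-21 : ℤ) else if d = 3 then (-20 : ℤ) else if d = 4 then (-9 : ℤ) else if d = 6 then (-17 : ℤ) else if d = 16 then (-8 : ℤ) else if d = 22 then (-21 : ℤ) else if d = 26 then (-3 : ℤ) else 0) else if c = 27 then (if d = 1 then (-37 : ℤ) else if d = 2 then (-83 : ℤ) else if d = 3 then (-14 : ℤ) else if d = 4 then (-3 : ℤ) else if d = 6 then (-13 : ℤ) else if d = 16 then (32 : ℤ) else if d = 22 then (-56 : ℤ) else if d = 26 then (17 : ℤ) else 0) else if c = 28 then (if d = 1 then (6 : ℤ) else if d = 2 then (34 : ℤ) else if d = 3 then (84 : ℤ) else if d = 4 then (156 : ℤ) else if d = 6 then (300 : ℤ) else if d = 16 then (9 : ℤ) else if d = 22 then (-8 : ℤ) else if d = 26 then (-12 : ℤ) else 0) else 0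

def capV (c d : ℕ) : ℤ :=
  if c = 2 then (if d = 1 then (-8 : ℤ) else if d = 2 then (13 : ℤ) else if d = 3 then (38 : ℤ) else if d = 4 then (67 : ℤ) else if d = 6 then (125 : ℤ) else if d = 16 then (-12 : ℤ) else if d = 22 then (-6 : ℤ) else if d = 26 then (-9 : ℤ) else 0) else if c = 3 then (if d = 1 then (-7 : ℤ) else if d = 2 then (-10 : ℤ) else if d = 3 then (-9 : ℤ) else if d = 4 then (-4 : ℤ) else if d = 6 then (21 : ℤ) else if d = 16 then (33 : ℤ) else if d = 22 then (-45 : ℤ) else if d = 26 then (-10 : ℤ) else 0) else if c = 4 then (if d = 1 then (-20 : ℤ) else if d = 2 then (-23 : ℤ) else if d = 3 then (-24 : ℤ) else if d = 4 then (-11 : ℤ) else if d = 6 then (-19 : ℤ) else if d = 16 then (-12 : ℤ) else if d = 22 then (-23 : ℤ) else if d = 26 then (-5 : ℤ) else 0) else if c = 5 then (if d = 1 then (1 : ℤ) else if d = 2 then (-1 : ℤ) else if d = 3 then (-2 : ℤ) else if d = 4 then (-9 : ℤ) else if d = 6 then (-13 : ℤ) else if d = 16 then (-3 : ℤ) else if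 d = 22 then (4 : ℤ) else if d = 26 then (-1 : ℤ) else 0) else if c = 6 then (if d = 1 then (4 : ℤ) else if d = 2 then (-3 : ℤ) else if d = 3 then (4 : ℤ) else if d = 4 then (-3 : ℤ) else if d = 6 then (-29 : ℤ) else if d = 16 then (6 : ℤ) else if d = 22 then (-25 : ℤ) else if d = 26 then (15 : ℤ) else 0) else if c = 7 then (if d = 1 then (7 : ℤ) else if d = 2 then (-1 : ℤ) else if d = 3 then (7 : ℤ) else if d = 4 then (-3 : ℤ) else if d = 6 then (-5 : ℤ) else if d = 16 then (0 : ℤ) else if d = 22 then (2 : ℤ) else if d = 26 then (5 : ℤ) else 0) else if c = 8 then (if d = 1 then (15 : ℤ) else if d = 2 then (7 : ℤ) else if d = 3 then (26 : ℤ) else if d = 4 then (14 : ℤ) else if d = 6 then (21 : ℤ) else if d = 16 then (15 : ℤ) else if d = 22 then (28 : ℤ) else if d = 26 then (38 : ℤ) else 0) else if c = 9 then (if d = 1 then (-22 : ℤ) else if d = 2 then (-37 : ℤ) else if d = 3 then (38 : ℤ) else if d = 4 then (16 : ℤ) else if d = 6 then (-42 : ℤ) else if d = 16 then (-26 : ℤ)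 else if d = 22 then (50 : ℤ) else if d = 26 then (-24 : ℤ) else 0) else if c = 10 then (if d = 1 then (-24 : ℤ) else if d = 2 then (46 : ℤ) else if d = 3 then (22 : ℤ) else if d = 4 then (-5 : ℤ) else if d = 6 then (-17 : ℤ) else if d = 16 then (-48 : ℤ) else if d = 22 then (59 : ℤ) else if d = 26 then (-25 : ℤ) else 0) else if c = 11 then (if d = 1 then (-19 : ℤ) else if d = 2 then (-32 : ℤ) else if d = 3 then (-18 : ℤ) else if d = 4 then (0 : ℤ) else if d = 6 then (-28 : ℤ) else if d = 16 then (-11 : ℤ) else if d = 22 then (-27 : ℤ) else if d = 26 then (-19 : ℤ) else 0) else if c = 12 then (if d = 1 then (-64 : ℤ) else if d = 2 then (11 : ℤ) else if d = 3 then (-51 : ℤ) else if d = 4 then (-16 : ℤ) else if d = 6 then (-6 : ℤ) else if d = 16 then (-26 : ℤ) else if d = 22 then (-31 : ℤ) else if d = 26 then (-44 : ℤ) else 0) else if c = 13 then (if d = 1 then (5 : ℤ) else if d = 2 then (-43 : ℤ) else if d = 3 then (20 : ℤ) else if d = 4 then (-3 : ℤ) else if d = 6 then (-52 : ℤ) else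 if d = 16 then (-30 : ℤ) else if d = 22 then (-5 : ℤ) else if d = 26 then (-11 : ℤ) else 0) else if c = 14 then (if d = 1 then (-3 : ℤ) else if d = 2 then (73 : ℤ) else if d = 3 then (34 : ℤ) else if d = 4 then (-11 : ℤ) else if d = 6 then (13 : ℤ) else if d = 16 then (-30 : ℤ) else if d = 22 then (80 : ℤ) else if d = 26 then (-1 : ℤ) else 0) else if c = 15 then (if d = 1 then (4 : ℤ) else if d = 2 then (-19 : ℤ) else if d = 3 then (-19 : ℤ) else if d = 4 then (-46 : ℤ) else if d = 6 then (-75 : ℤ) else if d = 16 then (0 : ℤ) else if d = 22 then (3 : ℤ) else if d = 26 then (-8 : ℤ) else 0) else if c = 16 then (if d = 1 then (-23 : ℤ) else if d = 2 then (-23 : ℤ) else if d = 3 then (-22 : ℤ) else if d = 4 then (-18 : ℤ) else if d = 6 then (-15 : ℤ) else if d = 16 then (34 : ℤ) else if d = 22 then (-42 : ℤ) else if d = 26 then (-3 : ℤ) else 0) else if c = 17 then (if d = 1 then (85 : ℤ) else if d = 2 then (75 : ℤ) else if d = 3 then (26 : ℤ) else if d = 4 then (17 : ℤ) else if d = 6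 then (99 : ℤ) else if d = 16 then (81 : ℤ) else if d = 22 then (43 : ℤ) else if d = 26 then (62 : ℤ) else 0) else if c = 18 then (if d = 1 then (24 : ℤ) else if d = 2 then (-4 : ℤ) else if d = 3 then (1 : ℤ) else if d = 4 then (-2 : ℤ) else if d = 6 then (-4 : ℤ) else if d = 16 then (1 : ℤ) else if d = 22 then (9 : ℤ) else if d = 26 then (5 : ℤ) else 0) else if c = 19 then (if d = 1 then (17 : ℤ) else if d = 2 then (17 : ℤ) else if d = 3 then (5 : ℤ) else if d = 4 then (-1 : ℤ) else if d = 6 then (4 : ℤ) else if d = 16 then (-4 : ℤ) else if d = 22 then (4 : ℤ) else if d = 26 then (-11 : ℤ) else 0) else if c = 20 then (if d = 1 then (29 : ℤ) else if d = 2 then (8 : ℤ) else if d = 3 then (-13 : ℤ) else if d = 4 then (10 : ℤ) else if d = 6 then (-29 : ℤ) else if d = 16 then (-36 : ℤ) else if d = 22 then (-80 : ℤ) else if d = 26 then (-43 : ℤ) else 0) else if c = 21 then (if d = 1 then (2 : ℤ) else if d = 2 then (15 : ℤ) else if d = 3 then (3 : ℤ) else if d = 4 then (-7 : ℤ) else if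 d = 6 then (33 : ℤ) else if d = 16 then (2 : ℤ) else if d = 22 then (-4 : ℤ) else if d = 26 then (-7 : ℤ) else 0) else if c = 22 then (if d = 1 then (19 : ℤ) else if d = 2 then (15 : ℤ) else if d = 3 then (7 : ℤ) else if d = 4 then (1 : ℤ) else if d = 6 then (8 : ℤ) else if d = 16 then (-4 : ℤ) else if d = 22 then (4 : ℤ) else if d = 26 then (-9 : ℤ) else 0) else if c = 23 then (if d = 1 then (-10 : ℤ) else if d = 2 then (0 : ℤ) else if d = 3 then (10 : ℤ) else if d = 4 then (-4 : ℤ) else if d = 6 then (-9 : ℤ) else if d = 16 then (-4 : ℤ) else if d = 22 then (8 : ℤ) else if d = 26 then (-2 : ℤ) else 0) else if c = 24 then (if d = 1 then (2 : ℤ) else if d = 2 then (3 : ℤ) else if d = 3 then (-17 : ℤ) else if d = 4 then (8 : ℤ) else if d = 6 then (14 : ℤ) else if d = 16 then (3 : ℤ) else if d = 22 then (-11 : ℤ) else if d = 26 then (-4 : ℤ) else 0) else if c = 25 then (if d = 1 then (2 : ℤ) else if d = 2 then (2 : ℤ) else if d = 3 then (-1 : ℤ) else if d = 4 then (7 : ℤ)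 else if d = 6 then (13 : ℤ) else if d = 16 then (3 : ℤ) else if d = 22 then (-10 : ℤ) else if d = 26 then (-4 : ℤ) else 0) else if c = 26 then (if d = 1 then (-1 : ℤ) else if d = 2 then (4 : ℤ) else if d = 3 then (15 : ℤ) else if d = 4 then (10 : ℤ) else if d = 6 then (13 : ℤ) else if d = 16 then (12 : ℤ) else if d = 22 then (17 : ℤ) else if d = 26 then (14 : ℤ) else 0) else if c = 27 then (if d = 1 then (40 : ℤ) else if d = 2 then (10 : ℤ) else if d = 3 then (-20 : ℤ) else if d = 4 then (14 : ℤ) else if d = 6 then (0 : ℤ) else if d = 16 then (-2 : ℤ) else if d = 22 then (-24 : ℤ) else if d = 26 then (-16 : ℤ) else 0) else if c = 28 then (if d = 1 then (-3 : ℤ) else if d = 2 then (-17 : ℤ) else if d = 3 then (-42 : ℤ) else if d = 4 then (-78 : ℤ) else if d = 6 then (-150 : ℤ) else if d = 16 then (0 : ℤ) else if d = 22 then (4 : ℤ) else if d = 26 then (6 : ℤ) else 0) else 0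

def U (c d : ZMod 29) : ℤ := capU c.val d.val
def V (c d : ZMod 29) : ℤ := capV c.val d.val

def Dfin : Finset (ZMod 29) := {0, 1, 2, 3, 4, 6, 14, 16, 22, 26}

set_option maxRecDepth 100000 in
set_option maxHeartbeats 1000000 in
theorem capKey : ∀ c : ZMod 29, c ≠ 0 → c ≠ 1 →
    ∀ a ∈ Dfin, ∀ b ∈ Dfin, ∀ d ∈ Dfin, (1 - c) * a + c * b = d →
      U c a + V c b ≤ U c d + V c d ∧ (a ≠ b → U c a + V c b < U c d + V c d) := by
  decide

theorem hU0 : ∀ c : ZMod 29, U c 0 = 0 := by decide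
theorem hU14 : ∀ c : ZMod 29, U c 14 = 0 := by decide
theorem hV0 : ∀ c : ZMod 29, V c 0 = 0 := by decide
theorem hV14 : ∀ c : ZMod 29, V c 14 = 0 := by decide

theorem mem_Dfin {d : ZMod 29}
    (h : d ∈ ({0, 1, 2, 3, 4, 6, 14, 16, 22, 26} : Set (ZMod 29))) : d ∈ Dfin := by
  simp only [Set.mem_insert_iff, Set.mem_singleton_iff] at h
  simp only [Dfin, Finset.mem_insert, Finset.mem_singleton]
  exact h

theorem sum_digits {n : ℕ} (f : ZMod 29 → ℤ) (hf0 : f 0 = 0) (hf14 : f 14 = 0)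
    (a : Fin n → ZMod 29)
    (h1 : ∀ i, a i ∈ ({0, 1, 2, 3, 4, 6, 14, 16, 22, 26} : Set (ZMod 29)))
    (h2 : ∀ d ∈ ({1, 2, 3, 4, 6, 16, 22, 26} : Set (ZMod 29)),
        (Finset.univ.filter (fun i => a i = d)).card = n / 10) :
    ∑ i, f (a i) = ((n / 10 : ℕ) : ℤ) * (f 1 + f 2 + f 3 + f 4 + f 6 + f 16 + f 22 + f 26) := by
  have h1' : ∀ i ∈ Finset.univ, a i ∈ Dfin := fun i _ => mem_Dfin (h1 i)
  rw [← Finset.sum_fiberwise_of_maps_to' h1' f]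
  have hc : ∀ d ∈ ({1, 2, 3, 4, 6, 16, 22, 26} : Set (ZMod 29)),
      ∑ _i ∈ Finset.univ.filter (fun i => a i = d), f d = ((n / 10 : ℕ) : ℤ) * f d := by
    intro d hd
    rw [Finset.sum_const, h2 d hd, nsmul_eq_mul]
  have hz : ∀ d : ZMod 29, f d = 0 →
      ∑ _i ∈ Finset.univ.filter (fun i => a i = d), f d = 0 := by
    intro d hd
    rw [Finset.sum_const, hd, smul_zero]
  rw [show Dfin = insert (0 : ZMod 29) (insert 1 (insert 2 (insert 3 (insert 4 (insert 6
      (insert 14 (insert 16 (insert 22 ({26} : Finset (ZMod 29)))))))))) from rfl]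
  rw [Finset.sum_insert (by decide), Finset.sum_insert (by decide),
    Finset.sum_insert (by decide), Finset.sum_insert (by decide),
    Finset.sum_insert (by decide), Finset.sum_insert (by decide),
    Finset.sum_insert (by decide), Finset.sum_insert (by decide),
    Finset.sum_insert (by decide), Finset.sum_singleton]
  rw [hz 0 hf0, hz 14 hf14, hc 1 (by simp), hc 2 (by simp), hc 3 (by simp), hc 4 (by simp),
    hc 6 (by simp), hc 16 (by simp), hc 22 (by simp), hc 26 (by simp)]
  ring

theorem cap_p29_digit_construction (n : ℕ) (hn : 10 ∣ n)
    (S : Set (Fin n → ZMod 29))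
    (hS : S = {a : Fin n → ZMod 29 |
        (∀ i, a i ∈ ({0, 1, 2, 3, 4, 6, 14, 16, 22, 26} : Set (ZMod 29))) ∧
        ∀ d ∈ ({1, 2, 3, 4, 6, 16, 22, 26} : Set (ZMod 29)),
          (Finset.univ.filter (fun i => a i = d)).card = n / 10}) :
    ∀ x ∈ S, ∀ y ∈ S, ∀ z ∈ S, x ≠ y → x ≠ z → y ≠ z →
      LinearIndependent (ZMod 29) ![y - x, z - x] := by
  haveI : Fact (Nat.Prime 29) := ⟨by norm_num⟩
  subst hS
  rintro x ⟨hx1, hx2⟩ y ⟨hy1, hy2⟩ z ⟨hz1, hz2⟩ hxy hxz hyz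
  rw [LinearIndependent.pair_iff]
  intro s t hst
  have hsti : ∀ i, s * (y i - x i) + t * (z i - x i) = 0 := by
    intro i
    have := congrFun hst i
    simpa [Pi.add_apply, Pi.smul_apply, Pi.sub_apply, smul_eq_mul] using this
  rcases eq_or_ne t 0 with ht | ht
  · subst ht
    refine ⟨?_, rfl⟩
    by_contra hs
    apply hxy
    funext i
    have h := hsti i
    rw [zero_mul, add_zero] at h
    rcases mul_eq_zero.mp h with h' | h'
    · exact absurd h' hs
    · exact (sub_eq_zero.mp h').symm
  · exfalso
    obtain ⟨w, hw⟩ : ∃ w : ZMod 29, w * t = 1 := ⟨t⁻¹, inv_mul_cancel₀ ht⟩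
    set c : ZMod 29 := w * (-s) with hcdef
    have hco : ∀ i, (1 - c) * x i + c * y i = z i := by
      intro i
      have h := hsti i
      linear_combination (-w) * h + (z i - x i) * hw
    rcases eq_or_ne c 0 with hc0 | hc0
    · apply hxz
      funext i
      have := hco i
      rw [hc0] at this
      simpa using this
    rcases eq_or_ne c 1 with hc1 | hc1
    · apply hyz
      funext i
      have := hco i
      rw [hc1] at this
      simpa using this
    have hkey := fun i => capKey c hc0 hc1 (x i) (mem_Dfin (hx1 i)) (y i) (mem_Dfin (hy1 i))
      (z i) (mem_Dfin (hz1 i)) (hco i)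
    obtain ⟨i0, hi0⟩ := Function.ne_iff.mp hxy
    have hsum : ∑ i, (U c (x i) + V c (y i)) < ∑ i, (U c (z i) + V c (z i)) :=
      Finset.sum_lt_sum (fun i _ => (hkey i).1) ⟨i0, Finset.mem_univ _, (hkey i0).2 hi0⟩
    rw [Finset.sum_add_distrib, Finset.sum_add_distrib,
      sum_digits (U c) (hU0 c) (hU14 c) x hx1 hx2,
      sum_digits (V c) (hV0 c) (hV14 c) y hy1 hy2,
      sum_digits (U c) (hU0 c) (hU14 c) z hz1 hz2,
      sum_digits (V c) (hV0 c) (hV14 c) z hz1 hz2] at hsum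
    exact lt_irrefl _ hsum
end

section
/- Let q be an odd prime power and a ∈ 𝔽_q be such that x² + x + a is irreducible over 𝔽_q. Then the set S = {(t² + s·t + a·s², s, t) : s, t ∈ 𝔽_q} ⊆ 𝔽_q^3 is an affine cap of size q²: no three pairwise distinct points of S are collinear. -/
/-!
Write `Q(s, t) = t² + s t + a s²`. Irreducibility of `X² + X + a` makes `Q` anisotropic, and the
graph `{(Q v, v)}` of any anisotropic quadratic form is a cap: with `x = v - u`, `y = w - u`, a
relation `α x + β y = 0`, `α (Q v - Q u) + β (Q w - Q u) = 0` loses its polar terms and becomes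
`α Q x + β Q y = 0`; multiplying by `β` and using `Q (β y) = Q (α x)` gives `α (α + β) Q x = 0`,
and both `α = 0` and `α + β = 0` force `α = β = 0` since `u, v, w` are distinct.
-/

open Polynomial

section AffineCap

variable (F : Type*) {M N : Type*} [Field F] [AddCommGroup M] [Module F M]
  [AddCommGroup N] [Module F N]

def IsAffineCap (S : Set M) : Prop :=
  ∀ x ∈ S, ∀ y ∈ S, ∀ z ∈ S, x ≠ y → x ≠ z → y ≠ z → LinearIndependent F ![y - x, z - x]

variable {F}

theorem IsAffineCap.image {S : Set M} (hS : IsAffineCap F S) (f : M →ₗ[F] N)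
    (hf : Function.Injective f) : IsAffineCap F (f '' S) := by
  rintro _ ⟨x, hx, rfl⟩ _ ⟨y, hy, rfl⟩ _ ⟨z, hz, rfl⟩ hxy hxz hyz
  have hind := (hS x hx y hy z hz (ne_of_apply_ne f hxy) (ne_of_apply_ne f hxz)
    (ne_of_apply_ne f hyz)).map' f (LinearMap.ker_eq_bot.mpr hf)
  have hcomp : f ∘ ![y - x, z - x] = ![f y - f x, f z - f x] := by
    ext i; fin_cases i <;> simp
  rwa [hcomp] at hind

end AffineCap

theorem QuadraticMap.Anisotropic.isAffineCap_range
    {F V : Type*} [Field F] [AddCommGroup V] [Module F V] {Q : QuadraticForm F V}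
    (hQ : Q.Anisotropic) : IsAffineCap F (Set.range fun v ↦ (Q v, v)) := by
  rintro _ ⟨u, rfl⟩ _ ⟨v, rfl⟩ _ ⟨w, rfl⟩ huv huw hvw
  rw [LinearIndependent.pair_iff]
  intro α β h
  simp only [Prod.mk_sub_mk, Prod.smul_mk, Prod.mk_add_mk, Prod.mk_eq_zero, smul_eq_mul] at h
  obtain ⟨hQ_comb, hcomb⟩ := h
  set x := v - u with hx
  set y := w - u with hy
  have hx0 : x ≠ 0 := sub_ne_zero.mpr (by rintro rfl; exact huv rfl)
  have hy0 : y ≠ 0 := sub_ne_zero.mpr (by rintro rfl; exact huw rfl)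
  have hxy : x - y ≠ 0 := by
    rw [hx, hy, sub_sub_sub_cancel_right]; exact sub_ne_zero.mpr (by rintro rfl; exact hvw rfl)
  have hQv : Q v - Q u = Q x + polar Q u x := by rw [polar, hx, add_sub_cancel u v]; ring
  have hQw : Q w - Q u = Q y + polar Q u y := by rw [polar, hy, add_sub_cancel u w]; ring
  have hpolar : α * polar Q u x + β * polar Q u y = 0 := by
    rw [← smul_eq_mul, ← smul_eq_mul, ← polar_smul_right, ← polar_smul_right, ← polar_add_right,
      hcomb, polar_zero_right]
  have key : α * Q x + β * Q y = 0 := by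
    rw [hQv, hQw] at hQ_comb
    linear_combination hQ_comb - hpolar
  have hQy : β ^ 2 * Q y = α ^ 2 * Q x := by
    have := congrArg Q (eq_neg_of_add_eq_zero_right hcomb)
    rw [QuadraticMap.map_neg, QuadraticMap.map_smul, QuadraticMap.map_smul] at this
    simp only [smul_eq_mul] at this
    linear_combination this
  have hQx : Q x ≠ 0 := fun h ↦ hx0 (hQ x h)
  have hαβ : α * (α + β) = 0 := by
    refine (mul_eq_zero.mp ?_).resolve_right hQx
    linear_combination β * key - hQy
  rcases mul_eq_zero.mp hαβ with hα | hsum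
  · subst hα
    simp only [zero_smul, zero_add, smul_eq_zero, hy0, or_false] at hcomb
    exact ⟨rfl, hcomb⟩
  · obtain rfl : β = -α := by linear_combination hsum
    rw [neg_smul, ← sub_eq_add_neg, ← smul_sub, smul_eq_zero] at hcomb
    have hα := hcomb.resolve_right hxy
    exact ⟨hα, by rw [hα, neg_zero]⟩

theorem Irreducible.sq_add_self_add_ne_zero {F : Type*} [Field F] {a : F}
    (hirr : Irreducible (X ^ 2 + X + C a)) (r : F) : r ^ 2 + r + a ≠ 0 := by
  refine fun h ↦ hirr.not_isRoot_of_natDegree_ne_one (x := r) ?_ (by simpa using h)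
  have : (X ^ 2 + X + C a : F[X]).natDegree = 2 := by compute_degree!
  omega

section Bose

variable {F : Type*} [Field F]

def boseForm (a : F) : QuadraticForm F (Fin 2 → F) :=
  QuadraticMap.proj 1 1 + QuadraticMap.proj 0 1 + a • QuadraticMap.proj 0 0

theorem boseForm_apply (a : F) (v : Fin 2 → F) :
    boseForm a v = v 1 ^ 2 + v 0 * v 1 + a * v 0 ^ 2 := by
  simp [boseForm, QuadraticMap.proj_apply, sq]

theorem boseForm_anisotropic {a : F} (hirr : Irreducible (X ^ 2 + X + C a)) :
    (boseForm a).Anisotropic := by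
  intro v hv
  rw [boseForm_apply] at hv
  have hv0 : v 0 = 0 := by
    by_contra hs
    refine hirr.sq_add_self_add_ne_zero (v 1 / v 0) ?_
    field_simp
    linear_combination hv
  have hv1 : v 1 = 0 := by
    rw [hv0] at hv
    exact pow_eq_zero_iff two_ne_zero |>.mp (by linear_combination hv)
  ext i; fin_cases i <;> assumption

end Bose

theorem bose_cap_general {F : Type*} [Field F] [Fintype F]
    (a : F)
    (hirr : Irreducible (Polynomial.X ^ 2 + Polynomial.X + Polynomial.C a))
    (S : Set (Fin 3 → F))
    (hS : S = {v | ∃ s t : F, v = ![t ^ 2 + s * t + a * s ^ 2, s, t]}) :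
    S.ncard = Fintype.card F ^ 2 ∧
      ∀ x ∈ S, ∀ y ∈ S, ∀ z ∈ S, x ≠ y → x ≠ z → y ≠ z →
        LinearIndependent F ![y - x, z - x] := by
  set L := Fin.consLinearEquiv F fun _ : Fin 3 ↦ F
  have hL (v : Fin 2 → F) :
      L (boseForm a v, v) = ![v 1 ^ 2 + v 0 * v 1 + a * v 0 ^ 2, v 0, v 1] := by
    rw [← boseForm_apply]; ext i; fin_cases i <;> rfl
  have hS' : S = L '' Set.range fun v ↦ (boseForm a v, v) := by
    rw [hS, ← Set.range_comp]
    ext p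
    simp only [Set.mem_ofPred_eq, Set.mem_range, Function.comp_def, hL]
    constructor
    · rintro ⟨s, t, rfl⟩; exact ⟨![s, t], rfl⟩
    · rintro ⟨v, rfl⟩; exact ⟨v 0, v 1, rfl⟩
  have hgraph : Function.Injective fun v : Fin 2 → F ↦ (boseForm a v, v) :=
    fun v w h ↦ congrArg Prod.snd h
  subst hS'
  refine ⟨?_, (boseForm_anisotropic hirr).isAffineCap_range.image L.toLinearMap L.injective⟩
  rw [Set.ncard_image_of_injective _ L.injective, Set.ncard_range_of_injective hgraph,
    Nat.card_eq_fintype_card, Fintype.card_fun, Fintype.card_fin]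

theorem bose_cap {F : Type*} [Field F] [Fintype F]
    (hodd : Odd (Fintype.card F)) (a : F)
    (hirr : Irreducible (Polynomial.X ^ 2 + Polynomial.X + Polynomial.C a))
    (S : Set (Fin 3 → F))
    (hS : S = {v | ∃ s t : F, v = ![t ^ 2 + s * t + a * s ^ 2, s, t]}) :
    S.ncard = Fintype.card F ^ 2 ∧
      ∀ x ∈ S, ∀ y ∈ S, ∀ z ∈ S, x ≠ y → x ≠ z → y ≠ z →
        LinearIndependent F ![y - x, z - x] :=
  bose_cap_general a hirr S hS
end

section
/- Let q = 3^m and λ ∈ 𝔽_q a non-square. Then S = {(x, y, x² − λ·y²) : x, y ∈ 𝔽_q} ⊆ 𝔽_q^3 is a cap of size q²: no three pairwise distinct points of S are collinear over 𝔽_q. -/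
theorem lev_cap {F : Type*} [Field F] [Fintype F] (m : ℕ)
    (hcard : Fintype.card F = 3 ^ m) (l : F) (hl : ¬∃ t : F, t ^ 2 = l)
    (S : Set (Fin 3 → F))
    (hS : S = {v | ∃ x y : F, v = ![x, y, x ^ 2 - l * y ^ 2]}) :
    S.ncard = Fintype.card F ^ 2 ∧
      ∀ x ∈ S, ∀ y ∈ S, ∀ z ∈ S, x ≠ y → x ≠ z → y ≠ z →
        LinearIndependent F ![y - x, z - x] := by
  constructor
  · -- cardinality
    have hSr : S = Set.range (fun p : F × F => ![p.1, p.2, p.1 ^ 2 - l * p.2 ^ 2]) := by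
      rw [hS]; ext v
      constructor
      · rintro ⟨x, y, rfl⟩; exact ⟨(x, y), rfl⟩
      · rintro ⟨⟨x, y⟩, rfl⟩; exact ⟨x, y, rfl⟩
    have hinj : Function.Injective (fun p : F × F => ![p.1, p.2, p.1 ^ 2 - l * p.2 ^ 2]) := by
      rintro ⟨a, b⟩ ⟨c, d⟩ h
      have h0 := congrFun h 0
      have h1 := congrFun h 1
      simp at h0 h1
      simp [h0, h1]
    rw [hSr, ← Set.image_univ, Set.ncard_image_of_injective _ hinj, Set.ncard_univ,
      Nat.card_eq_fintype_card, Fintype.card_prod, sq]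
  · rintro x hx y hy z hz hxy hxz hyz
    rw [hS] at hx hy hz
    obtain ⟨a, b, rfl⟩ := hx
    obtain ⟨c, d, rfl⟩ := hy
    obtain ⟨e, f, rfl⟩ := hz
    rw [LinearIndependent.pair_iff]
    intro s t hst
    have h0 := congrFun hst 0
    have h1 := congrFun hst 1
    have h2 := congrFun hst 2
    simp [Pi.sub_apply, Pi.smul_apply, smul_eq_mul] at h0 h1 h2
    -- h0 : s * (c - a) + t * (e - a) = 0, etc.
    have hQ : ∀ u v : F, u ^ 2 - l * v ^ 2 = 0 → u = 0 ∧ v = 0 := by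
      intro u v huv
      by_cases hv : v = 0
      · subst hv
        constructor
        · have : u ^ 2 = 0 := by linear_combination huv
          exact pow_eq_zero_iff (n := 2) (by norm_num) |>.mp this
        · rfl
      · exfalso; exact hl ⟨u / v, by field_simp; linear_combination huv⟩
    have hne1 : ¬(c = a ∧ d = b) := by
      rintro ⟨rfl, rfl⟩; exact hxy rfl
    have hne2 : ¬(e = a ∧ f = b) := by
      rintro ⟨rfl, rfl⟩; exact hxz rfl
    have hne3 : ¬(e = c ∧ f = d) := by
      rintro ⟨rfl, rfl⟩; exact hyz rfl
    by_cases hs : s = 0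
    · subst hs
      refine ⟨rfl, ?_⟩
      by_contra ht
      apply hne2
      constructor
      · have : t * (e - a) = 0 := by linear_combination h0
        have := mul_eq_zero.mp this
        rcases this with h | h
        · exact absurd h ht
        · exact sub_eq_zero.mp h
      · have : t * (f - b) = 0 := by linear_combination h1
        rcases mul_eq_zero.mp this with h | h
        · exact absurd h ht
        · exact sub_eq_zero.mp h
    · by_cases ht : t = 0
      · exfalso
        subst ht
        apply hne1
        constructor
        · have : s * (c - a) = 0 := by linear_combination h0
          rcases mul_eq_zero.mp this with h | h
          · exact absurd h hs
          · exact sub_eq_zero.mp h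
        · have : s * (d - b) = 0 := by linear_combination h1
          rcases mul_eq_zero.mp this with h | h
          · exact absurd h hs
          · exact sub_eq_zero.mp h
      · exfalso
        have key : s * (s + t) * ((c - a) ^ 2 - l * (d - b) ^ 2) = 0 := by
          linear_combination t * h2 - (t * (e + a) - s * (c - a)) * h0 +
            l * (t * (f + b) - s * (d - b)) * h1
        rcases mul_eq_zero.mp key with h | hQ0
        · rcases mul_eq_zero.mp h with h' | h'
          · exact hs h'
          · -- s + t = 0, so y = z
            apply hne3
            have hts : t = -s := by linear_combination h'
            subst hts
            constructor
            · have : s * (c - e) = 0 := by linear_combination h0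
              rcases mul_eq_zero.mp this with h'' | h''
              · exact absurd h'' hs
              · exact (sub_eq_zero.mp h'').symm
            · have : s * (d - f) = 0 := by linear_combination h1
              rcases mul_eq_zero.mp this with h'' | h''
              · exact absurd h'' hs
              · exact (sub_eq_zero.mp h'').symm
        · obtain ⟨hca, hdb⟩ := hQ (c - a) (d - b) hQ0
          exact hne1 ⟨sub_eq_zero.mp hca, sub_eq_zero.mp hdb⟩
end
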